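/- In GL(2, ℤ₂), let G_{2,b} = ⟨−Id, 3·Id, [[2,1],[−1,2]]⟩, G_{4,c} = ⟨−3·Id, [[2,−1],[1,2]]⟩ and G_{4,d} = ⟨−3·Id, [[−2,1],[−1,−2]]⟩ be the closed subgroups topologically generated by the indicated matrices, and set c₁ = diag(1,−1) and c₁′ = [[0,1],[1,0]]. Then ⟨G_{2,b}, c₁⟩ = ⟨G_{4,c}, c₁, −Id⟩ = ⟨G_{4,d}, c₁, −Id⟩ and ⟨G_{2,b}, c₁′⟩ = ⟨G_{4,c}, c₁′, −Id⟩ = ⟨G_{4,d}, c₁′, −Id⟩; moreover −Id ∈ ⟨G_{2,b}, c₁⟩ while −Id ∉ ⟨G_{4,c}, c₁⟩ and −Id ∉ ⟨G_{4,d}, c₁⟩. -/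
import Mathlib


open scoped MatrixGroups

/-- The closed subgroup of `GL(2, ℤ₂)` topologically generated by the elements whose
underlying matrices lie in the set `S` of matrices. -/
noncomputable def clGen (S : Set (Matrix (Fin 2) (Fin 2) ℤ_[2])) : Subgroup (GL (Fin 2) ℤ_[2]) :=
  (Subgroup.closure
    {g : GL (Fin 2) ℤ_[2] | (g : Matrix (Fin 2) (Fin 2) ℤ_[2]) ∈ S}).topologicalClosure

/-- The closed subgroup of `GL(2, ℤ₂)` topologically generated by a subgroup `X` together
with a set `T` of elements. -/
noncomputable def tjoin (X : Subgroup (GL (Fin 2) ℤ_[2])) (T : Set (GL (Fin 2) ℤ_[2])) :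
    Subgroup (GL (Fin 2) ℤ_[2]) :=
  (X ⊔ Subgroup.closure T).topologicalClosure

/-- The involution `c₁ = diag(1,−1)` in `GL(2, ℤ₂)`. -/
noncomputable def c1 : GL (Fin 2) ℤ_[2] :=
  ⟨!![1, 0; 0, -1], !![1, 0; 0, -1],
    by ext i j; fin_cases i <;> fin_cases j <;> simp [Matrix.mul_apply, Fin.sum_univ_succ],
    by ext i j; fin_cases i <;> fin_cases j <;> simp [Matrix.mul_apply, Fin.sum_univ_succ]⟩

/-- The involution `c₁′ = [[0,1],[1,0]]` in `GL(2, ℤ₂)`. -/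
noncomputable def c1' : GL (Fin 2) ℤ_[2] :=
  ⟨!![0, 1; 1, 0], !![0, 1; 1, 0],
    by ext i j; fin_cases i <;> fin_cases j <;> simp [Matrix.mul_apply, Fin.sum_univ_succ],
    by ext i j; fin_cases i <;> fin_cases j <;> simp [Matrix.mul_apply, Fin.sum_univ_succ]⟩

/-- `G_{2,b} = ⟨−Id, 3·Id, [[2,1],[−1,2]]⟩` (topologically generated). -/
noncomputable def G2b : Subgroup (GL (Fin 2) ℤ_[2]) :=
  clGen {(-1 : Matrix (Fin 2) (Fin 2) ℤ_[2]), (3 : Matrix (Fin 2) (Fin 2) ℤ_[2]),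
    !![2, 1; -1, 2]}

/-- `G_{4,c} = ⟨−3·Id, [[2,−1],[1,2]]⟩` (topologically generated). -/
noncomputable def G4c : Subgroup (GL (Fin 2) ℤ_[2]) :=
  clGen {(-3 : Matrix (Fin 2) (Fin 2) ℤ_[2]), !![2, -1; 1, 2]}

/-- `G_{4,d} = ⟨−3·Id, [[−2,1],[−1,−2]]⟩` (topologically generated). -/
noncomputable def G4d : Subgroup (GL (Fin 2) ℤ_[2]) :=
  clGen {(-3 : Matrix (Fin 2) (Fin 2) ℤ_[2]), !![-2, 1; -1, -2]}

namespace Stmt16Aux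

abbrev Mat := Matrix (Fin 2) (Fin 2) ℤ_[2]
abbrev GL2 := GL (Fin 2) ℤ_[2]
abbrev R8 := ZMod 8
abbrev MatR := Matrix (Fin 2) (Fin 2) R8

/-! ### reduction mod 8 -/

noncomputable def rho : ℤ_[2] →+* R8 :=
  (ZMod.castHom (by norm_num : (8:ℕ) ∣ 2^3) R8).comp (PadicInt.toZModPow 3)

noncomputable instance : TopologicalSpace R8 := ⊥
instance : DiscreteTopology R8 := ⟨rfl⟩

lemma continuous_rho : Continuous rho := by
  rw [continuous_def]
  intro s _
  rw [isOpen_iff_forall_mem_open]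
  intro x hx
  refine ⟨Metric.ball x ((2:ℝ)^(-2:ℤ)), fun y hy => ?_, Metric.isOpen_ball, ?_⟩
  · have h1 : ‖y - x‖ < (2:ℝ)^(-3+1:ℤ) := by
      simpa [dist_eq_norm] using hy
    have h2 : ‖y - x‖ ≤ (2:ℝ)^(-3:ℤ) :=
      (PadicInt.norm_le_pow_iff_norm_lt_pow_add_one _ _).2 h1
    have h3 : y - x ∈ RingHom.ker (PadicInt.toZModPow (p := 2) 3) := by
      rw [PadicInt.ker_toZModPow, ← PadicInt.norm_le_pow_iff_mem_span_pow]
      exact_mod_cast h2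
    have h4 : rho y = rho x := by
      rw [RingHom.mem_ker] at h3
      have h5 : rho (y - x) = 0 := by
        show (ZMod.castHom (by norm_num : (8:ℕ) ∣ 2^3) R8) (PadicInt.toZModPow 3 (y - x)) = 0
        rw [h3, map_zero]
      rw [map_sub, sub_eq_zero] at h5
      exact h5
    simpa [h4] using hx
  · exact Metric.mem_ball_self (by positivity)

/-! ### ℕ-codes for 2×2 matrices mod 8 -/

def mulCode (m n : ℕ) : ℕ :=
  ((m/512%8 * (n/512%8) + m/64%8 * (n/8%8)) % 8) * 512 +
  ((m/512%8 * (n/64%8) + m/64%8 * (n%8)) % 8) * 64 +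
  ((m/8%8 * (n/512%8) + m%8 * (n/8%8)) % 8) * 8 +
  ((m/8%8 * (n/64%8) + m%8 * (n%8)) % 8)

noncomputable def cdM (m : MatR) : ℕ :=
  (m 0 0).val * 512 + (m 0 1).val * 64 + (m 1 0).val * 8 + (m 1 1).val

lemma cdM_lt (m : MatR) : cdM m < 4096 := by
  have h1 := ZMod.val_lt (m 0 0); have h2 := ZMod.val_lt (m 0 1)
  have h3 := ZMod.val_lt (m 1 0); have h4 := ZMod.val_lt (m 1 1)
  unfold cdM; omega

lemma cdM_digits (m : MatR) :
    cdM m / 512 % 8 = (m 0 0).val ∧ cdM m / 64 % 8 = (m 0 1).val ∧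
    cdM m / 8 % 8 = (m 1 0).val ∧ cdM m % 8 = (m 1 1).val := by
  have h1 := ZMod.val_lt (m 0 0); have h2 := ZMod.val_lt (m 0 1)
  have h3 := ZMod.val_lt (m 1 0); have h4 := ZMod.val_lt (m 1 1)
  unfold cdM
  refine ⟨by omega, by omega, by omega, by omega⟩

lemma cdM_injective : Function.Injective cdM := by
  intro m n h
  obtain ⟨a1, a2, a3, a4⟩ := cdM_digits m
  obtain ⟨b1, b2, b3, b4⟩ := cdM_digits n
  rw [h] at a1 a2 a3 a4
  ext i j
  have hval : ∀ i j : Fin 2, (m i j).val = (n i j).val → m i j = n i j := by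
    intro i j hh
    exact ZMod.val_injective 8 hh
  fin_cases i <;> fin_cases j
  · exact hval 0 0 (by omega)
  · exact hval 0 1 (by omega)
  · exact hval 1 0 (by omega)
  · exact hval 1 1 (by omega)

lemma val_entry (x y z w : R8) : (x*y + z*w).val = (x.val*y.val + z.val*w.val) % 8 := by
  rw [ZMod.val_add, ZMod.val_mul, ZMod.val_mul]
  generalize x.val * y.val = A
  generalize z.val * w.val = B
  omega

lemma cdM_mul (m n : MatR) : cdM (m * n) = mulCode (cdM m) (cdM n) := by
  obtain ⟨a1, a2, a3, a4⟩ := cdM_digits m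
  obtain ⟨b1, b2, b3, b4⟩ := cdM_digits n
  have e : ∀ i j, (m * n) i j = m i 0 * n 0 j + m i 1 * n 1 j := by
    intro i j; simp [Matrix.mul_apply, Fin.sum_univ_succ]
  show ((m*n) 0 0).val * 512 + ((m*n) 0 1).val * 64 + ((m*n) 1 0).val * 8 + ((m*n) 1 1).val = _
  rw [e 0 0, e 0 1, e 1 0, e 1 1, val_entry, val_entry, val_entry, val_entry]
  unfold mulCode
  rw [a1, a2, a3, a4, b1, b2, b3, b4]

lemma cdM_one : cdM 1 = 513 := by
  have e : (1 : MatR) = !![1,0;0,1] := by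
    ext i j; fin_cases i <;> fin_cases j <;> simp [Matrix.one_apply]
  rw [e]
  show (1 : R8).val * 512 + (0 : R8).val * 64 + (0 : R8).val * 8 + (1 : R8).val = 513
  decide

noncomputable def decM (q : ℕ) : MatR :=
  !![((q/512%8 : ℕ) : R8), ((q/64%8 : ℕ) : R8); ((q/8%8 : ℕ) : R8), ((q%8 : ℕ) : R8)]

lemma cdM_decM {q : ℕ} (hq : q < 4096) : cdM (decM q) = q := by
  unfold cdM decM
  simp only [Matrix.cons_val', Matrix.cons_val_zero, Matrix.cons_val_one, Matrix.head_cons,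
    Matrix.empty_val', Matrix.cons_val_fin_one, Matrix.head_fin_const, Matrix.of_apply]
  rw [ZMod.val_natCast, ZMod.val_natCast, ZMod.val_natCast, ZMod.val_natCast]
  omega


/-! ### the mod-8 subgroups as lists of codes -/

def Lc : List ℕ := [513, 519, 1102, 1146, 1246, 1258, 1370, 1390, 1482, 1534, 1827, 1829, 2563, 2565, 3873, 3879]
def Ld : List ℕ := [513, 519, 1827, 1829, 2563, 2565, 3146, 3198, 3290, 3310, 3422, 3434, 3534, 3578, 3873, 3879]

lemma Lc_mul : ∀ p ∈ Lc, ∀ q ∈ Lc, mulCode p q ∈ Lc := by decide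
lemma Lc_inv : ∀ p ∈ Lc, ∃ q ∈ Lc, mulCode q p = 513 := by decide
lemma Lc_lt : ∀ p ∈ Lc, p < 4096 := by decide
lemma Ld_mul : ∀ p ∈ Ld, ∀ q ∈ Ld, mulCode p q ∈ Ld := by decide
lemma Ld_inv : ∀ p ∈ Ld, ∃ q ∈ Ld, mulCode q p = 513 := by decide
lemma Ld_lt : ∀ p ∈ Ld, p < 4096 := by decide

/-- the code of (the mod-8 reduction of) an element of `GL(2,ℤ₂)`. -/
noncomputable def codeOf (g : GL2) : ℕ := cdM (rho.mapMatrix (g : Mat))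

lemma codeOf_mul (g h : GL2) : codeOf (g * h) = mulCode (codeOf g) (codeOf h) := by
  unfold codeOf
  rw [Units.val_mul, map_mul, cdM_mul]

/-- The closed subgroup of `GL(2,ℤ₂)` given by a sub-multiplicative list of codes. -/
noncomputable def K (L : List ℕ) (hmul : ∀ p ∈ L, ∀ q ∈ L, mulCode p q ∈ L)
    (hone : (513:ℕ) ∈ L) (hinv : ∀ p ∈ L, ∃ q ∈ L, mulCode q p = 513)
    (hlt : ∀ p ∈ L, p < 4096) : Subgroup GL2 where
  carrier := {g | codeOf g ∈ L}
  mul_mem' := by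
    intro a b ha hb
    show codeOf (a * b) ∈ L
    rw [codeOf_mul]
    exact hmul _ ha _ hb
  one_mem' := by
    show codeOf 1 ∈ L
    unfold codeOf
    rw [Units.val_one, map_one, cdM_one]
    exact hone
  inv_mem' := by
    intro g hg
    show codeOf g⁻¹ ∈ L
    obtain ⟨q, hqL, hq⟩ := hinv _ hg
    have hab : rho.mapMatrix (g : Mat) * rho.mapMatrix ((g⁻¹ : GL2) : Mat) = 1 := by
      rw [← map_mul, ← Units.val_mul, mul_inv_cancel, Units.val_one, map_one]
    have h1 : decM q * rho.mapMatrix (g : Mat) = 1 := by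
      apply cdM_injective
      rw [cdM_mul, cdM_decM (hlt _ hqL), cdM_one]
      exact hq
    have h2 : rho.mapMatrix ((g⁻¹ : GL2) : Mat) = decM q := by
      calc rho.mapMatrix ((g⁻¹ : GL2) : Mat)
          = 1 * rho.mapMatrix ((g⁻¹ : GL2) : Mat) := (one_mul _).symm
        _ = decM q * rho.mapMatrix (g : Mat) * rho.mapMatrix ((g⁻¹ : GL2) : Mat) := by rw [h1]
        _ = decM q * (rho.mapMatrix (g : Mat) * rho.mapMatrix ((g⁻¹ : GL2) : Mat)) := by
              rw [mul_assoc]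
        _ = decM q := by rw [hab, mul_one]
    show cdM (rho.mapMatrix ((g⁻¹ : GL2) : Mat)) ∈ L
    rw [h2, cdM_decM (hlt _ hqL)]
    exact hqL

lemma isClosed_K (L : List ℕ) (hmul) (hone) (hinv) (hlt) :
    IsClosed ((K L hmul hone hinv hlt : Subgroup GL2) : Set GL2) := by
  have hcar : ((K L hmul hone hinv hlt : Subgroup GL2) : Set GL2)
      = ⋃ p ∈ L, ⋂ i, ⋂ j, {g : GL2 | rho ((g : Mat) i j) = decM p i j} := by
    ext g
    simp only [Set.mem_iUnion, Set.mem_iInter, Set.mem_setOf_eq]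
    constructor
    · intro hg
      refine ⟨codeOf g, hg, fun i j => ?_⟩
      have : rho.mapMatrix (g : Mat) = decM (codeOf g) := by
        apply cdM_injective
        rw [cdM_decM (hlt _ hg)]
        rfl
      rw [← this]
      rfl
    · rintro ⟨p, hpL, hp⟩
      have : rho.mapMatrix (g : Mat) = decM p := by
        ext i j
        exact hp i j
      show codeOf g ∈ L
      unfold codeOf
      rw [this, cdM_decM (hlt _ hpL)]
      exact hpL
  rw [hcar]
  apply Set.Finite.isClosed_biUnion (List.finite_toSet L)
  intro p _
  apply isClosed_iInter
  intro i
  apply isClosed_iInter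
  intro j
  have : {g : GL2 | rho ((g : Mat) i j) = decM p i j}
      = (fun g : GL2 => rho ((g : Mat) i j)) ⁻¹' {decM p i j} := rfl
  rw [this]
  exact IsClosed.preimage
    (continuous_rho.comp ((Units.continuous_val).matrix_elem i j)) (isClosed_discrete _)

/-! ### generator computations -/

lemma codeOf_eq (g : GL2) (a b c d : ℤ_[2]) (h : (g : Mat) = !![a,b;c,d]) :
    codeOf g = (rho a).val*512 + (rho b).val*64 + (rho c).val*8 + (rho d).val := by
  unfold codeOf cdM
  rw [h]
  simp [RingHom.mapMatrix_apply, Matrix.map_apply]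

lemma neg3_eq : (-3 : Mat) = !![-3,0;0,-3] := by
  have h3 : (3 : Mat) = !![3,0;0,3] := by
    ext i j; fin_cases i <;> fin_cases j <;>
      simp [← Matrix.diagonal_ofNat, Matrix.diagonal_apply]
  rw [show (-3 : Mat) = -(3:Mat) by norm_num, h3]
  ext i j; fin_cases i <;> fin_cases j <;> simp

lemma rho_vals : (rho (-3)).val = 5 ∧ (rho 0).val = 0 ∧ (rho 2).val = 2 ∧
    (rho (-1)).val = 7 ∧ (rho 1).val = 1 ∧ (rho (-2)).val = 6 := by
  have e1 : rho (-3) = 5 := by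
    rw [show (-3 : ℤ_[2]) = -3 from rfl, map_neg, map_ofNat]; decide
  have e2 : rho (-1) = 7 := by rw [map_neg, map_one]; decide
  have e3 : rho (-2) = 6 := by rw [map_neg, map_ofNat]; decide
  rw [e1, e2, e3, map_zero, map_one, map_ofNat]
  refine ⟨by decide, rfl, by decide, by decide, by decide, by decide⟩

lemma codeOf_neg3 (g : GL2) (hg : (g : Mat) = -3) : codeOf g = 2565 := by
  obtain ⟨v1, v2, v3, v4, v5, v6⟩ := rho_vals
  rw [codeOf_eq g _ _ _ _ (by rw [hg, neg3_eq]), v1, v2]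

lemma codeOf_B (g : GL2) (hg : (g : Mat) = !![2,-1;1,2]) : codeOf g = 1482 := by
  obtain ⟨v1, v2, v3, v4, v5, v6⟩ := rho_vals
  rw [codeOf_eq g _ _ _ _ hg, v3, v4, v5]

lemma codeOf_C (g : GL2) (hg : (g : Mat) = !![-2,1;-1,-2]) : codeOf g = 3198 := by
  obtain ⟨v1, v2, v3, v4, v5, v6⟩ := rho_vals
  rw [codeOf_eq g _ _ _ _ hg, v4, v5, v6]

lemma codeOf_neg1 : codeOf (-1 : GL2) = 3591 := by
  obtain ⟨v1, v2, v3, v4, v5, v6⟩ := rho_vals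
  have h : ((-1 : GL2) : Mat) = !![-1,0;0,-1] := by
    rw [Units.val_neg, Units.val_one]
    ext i j; fin_cases i <;> fin_cases j <;> simp
  rw [codeOf_eq _ _ _ _ _ h, v2, v4]

/-! ### rewriting `tjoin (clGen S) T` as a single topological closure -/

lemma tjoin_clGen (S : Set Mat) (T : Set GL2) :
    tjoin (clGen S) T =
      (Subgroup.closure ({g : GL2 | (g : Mat) ∈ S} ∪ T)).topologicalClosure := by
  unfold tjoin clGen
  apply le_antisymm
  · apply Subgroup.topologicalClosure_minimal
    · apply sup_le
      · apply Subgroup.topologicalClosure_minimal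
        · exact le_trans (Subgroup.closure_mono Set.subset_union_left)
            (Subgroup.le_topologicalClosure _)
        · exact Subgroup.isClosed_topologicalClosure _
      · exact le_trans (Subgroup.closure_mono Set.subset_union_right)
          (Subgroup.le_topologicalClosure _)
    · exact Subgroup.isClosed_topologicalClosure _
  · apply Subgroup.topologicalClosure_minimal
    · rw [Subgroup.closure_union]
      apply sup_le
      · exact le_trans (le_trans (Subgroup.le_topologicalClosure _) le_sup_left)
          (Subgroup.le_topologicalClosure _)
      · exact le_trans le_sup_right (Subgroup.le_topologicalClosure _)
    · exact Subgroup.isClosed_topologicalClosure _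

/-! ### the abstract subgroup equalities -/

lemma neg_one_val : ((-1 : GL2) : Mat) = -1 := by
  rw [Units.val_neg, Units.val_one]

lemma closure_b_eq (u : GL2)
    (hu1 : ((u⁻¹ : GL2) : Mat) * !![2,1;-1,2] * (u : Mat) = !![2,-1;1,2])
    (hu2 : ((u : GL2) : Mat) * !![2,-1;1,2] * ((u⁻¹ : GL2) : Mat) = !![2,1;-1,2]) :
    Subgroup.closure ({g : GL2 | (g : Mat) ∈
        ({(-1 : Mat), (3 : Mat), !![2, 1; -1, 2]} : Set Mat)} ∪ {u})
      = Subgroup.closure ({g : GL2 | (g : Mat) ∈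
        ({(-3 : Mat), !![2, -1; 1, 2]} : Set Mat)} ∪ {u, -1}) := by
  have humem2 : u ∈ ({u, -1} : Set GL2) := Or.inl rfl
  have hneg2 : (-1 : GL2) ∈ ({u, -1} : Set GL2) := Or.inr rfl
  apply le_antisymm <;> rw [Subgroup.closure_le] <;> rintro g (hg | hg)
  · -- generators of G2b
    simp only [Set.mem_setOf_eq, Set.mem_insert_iff, Set.mem_singleton_iff] at hg
    rcases hg with hg | hg | hg
    · -- val g = -1
      have : g = (-1 : GL2) := Units.ext (by rw [hg, neg_one_val])
      rw [this]
      exact Subgroup.subset_closure (Or.inr hneg2)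
    · -- val g = 3
      have hmem : -g ∈ ({g : GL2 | (g : Mat) ∈
          ({(-3 : Mat), !![2, -1; 1, 2]} : Set Mat)} ∪ {u, -1}) := by
        left
        simp only [Set.mem_setOf_eq]
        rw [Units.val_neg, hg]
        exact Or.inl (by norm_num)
      have : g = (-1 : GL2) * (-g) := by simp
      rw [this]
      exact mul_mem (Subgroup.subset_closure (Or.inr hneg2))
        (Subgroup.subset_closure hmem)
    · -- val g = [[2,1],[-1,2]]
      have hb : ((u⁻¹ * g * u : GL2) : Mat) = !![2,-1;1,2] := by
        rw [Units.val_mul, Units.val_mul, hg]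
        exact hu1
      have hmem : (u⁻¹ * g * u : GL2) ∈ ({g : GL2 | (g : Mat) ∈
          ({(-3 : Mat), !![2, -1; 1, 2]} : Set Mat)} ∪ {u, -1}) :=
        Or.inl (Or.inr (by simpa using hb))
      have : g = u * (u⁻¹ * g * u) * u⁻¹ := by group
      rw [this]
      exact mul_mem (mul_mem (Subgroup.subset_closure (Or.inr humem2))
        (Subgroup.subset_closure hmem))
        (inv_mem (Subgroup.subset_closure (Or.inr humem2)))
  · -- g = u
    rw [Set.mem_singleton_iff] at hg
    rw [hg]
    exact Subgroup.subset_closure (Or.inr humem2)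
  · -- generators of G4c
    simp only [Set.mem_setOf_eq, Set.mem_insert_iff, Set.mem_singleton_iff] at hg
    rcases hg with hg | hg
    · -- val g = -3
      have hmem : -g ∈ ({g : GL2 | (g : Mat) ∈
          ({(-1 : Mat), (3 : Mat), !![2, 1; -1, 2]} : Set Mat)} ∪ {u}) := by
        left
        simp only [Set.mem_setOf_eq]
        rw [Units.val_neg, hg]
        exact Or.inr (Or.inl (by norm_num))
      have hneg : (-1 : GL2) ∈ ({g : GL2 | (g : Mat) ∈
          ({(-1 : Mat), (3 : Mat), !![2, 1; -1, 2]} : Set Mat)} ∪ {u}) :=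
        Or.inl (Or.inl neg_one_val)
      have : g = (-1 : GL2) * (-g) := by simp
      rw [this]
      exact mul_mem (Subgroup.subset_closure hneg) (Subgroup.subset_closure hmem)
    · -- val g = [[2,-1],[1,2]]
      have ha : ((u * g * u⁻¹ : GL2) : Mat) = !![2,1;-1,2] := by
        rw [Units.val_mul, Units.val_mul, hg]
        exact hu2
      have hmem : (u * g * u⁻¹ : GL2) ∈ ({g : GL2 | (g : Mat) ∈
          ({(-1 : Mat), (3 : Mat), !![2, 1; -1, 2]} : Set Mat)} ∪ {u}) :=
        Or.inl (Or.inr (Or.inr (by simpa using ha)))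
      have humem : u ∈ ({g : GL2 | (g : Mat) ∈
          ({(-1 : Mat), (3 : Mat), !![2, 1; -1, 2]} : Set Mat)} ∪ {u}) := Or.inr rfl
      have : g = u⁻¹ * (u * g * u⁻¹) * u := by group
      rw [this]
      exact mul_mem (mul_mem (inv_mem (Subgroup.subset_closure humem))
        (Subgroup.subset_closure hmem)) (Subgroup.subset_closure humem)
  · -- g ∈ {u, -1}
    rcases hg with hg | hg
    · rw [hg]
      exact Subgroup.subset_closure (Or.inr (Set.mem_singleton u))
    · rw [Set.mem_singleton_iff] at hg
      rw [hg]
      exact Subgroup.subset_closure (Or.inl (Or.inl neg_one_val))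

lemma closure_c_eq_d (u : GL2) :
    Subgroup.closure ({g : GL2 | (g : Mat) ∈
        ({(-3 : Mat), !![2, -1; 1, 2]} : Set Mat)} ∪ {u, -1})
      = Subgroup.closure ({g : GL2 | (g : Mat) ∈
        ({(-3 : Mat), !![-2, 1; -1, -2]} : Set Mat)} ∪ {u, -1}) := by
  have hBC : -(!![2,-1;1,2] : Mat) = !![-2,1;-1,-2] := by
    ext i j; fin_cases i <;> fin_cases j <;> simp
  have hneg2 : (-1 : GL2) ∈ ({u, -1} : Set GL2) := Or.inr rfl
  apply le_antisymm <;> rw [Subgroup.closure_le] <;> rintro g (hg | hg)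
  · simp only [Set.mem_setOf_eq, Set.mem_insert_iff, Set.mem_singleton_iff] at hg
    rcases hg with hg | hg
    · exact Subgroup.subset_closure (Or.inl (Or.inl hg))
    · have hmem : -g ∈ ({g : GL2 | (g : Mat) ∈
          ({(-3 : Mat), !![-2, 1; -1, -2]} : Set Mat)} ∪ {u, -1}) := by
        left
        simp only [Set.mem_setOf_eq]
        rw [Units.val_neg, hg]
        exact Or.inr hBC
      have : g = (-1 : GL2) * (-g) := by simp
      rw [this]
      exact mul_mem (Subgroup.subset_closure (Or.inr hneg2))
        (Subgroup.subset_closure hmem)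
  · exact Subgroup.subset_closure (Or.inr hg)
  · simp only [Set.mem_setOf_eq, Set.mem_insert_iff, Set.mem_singleton_iff] at hg
    rcases hg with hg | hg
    · exact Subgroup.subset_closure (Or.inl (Or.inl hg))
    · have hmem : -g ∈ ({g : GL2 | (g : Mat) ∈
          ({(-3 : Mat), !![2, -1; 1, 2]} : Set Mat)} ∪ {u, -1}) := by
        left
        simp only [Set.mem_setOf_eq]
        rw [Units.val_neg, hg, ← hBC, neg_neg]
        exact Or.inr rfl
      have : g = (-1 : GL2) * (-g) := by simp
      rw [this]
      exact mul_mem (Subgroup.subset_closure (Or.inr hneg2))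
        (Subgroup.subset_closure hmem)
  · exact Subgroup.subset_closure (Or.inr hg)

lemma codeOf_c1_gen (g : GL2) (hg : (g : Mat) = !![1,0;0,-1]) : codeOf g = 519 := by
  obtain ⟨v1, v2, v3, v4, v5, v6⟩ := rho_vals
  rw [codeOf_eq g _ _ _ _ hg, v2, v4, v5]

/-- non-membership of `-1`, for either of the two lists of codes -/
lemma not_mem_aux (L : List ℕ) (hmul : ∀ p ∈ L, ∀ q ∈ L, mulCode p q ∈ L)
    (hone : (513:ℕ) ∈ L) (hinv : ∀ p ∈ L, ∃ q ∈ L, mulCode q p = 513)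
    (hlt : ∀ p ∈ L, p < 4096) (S : Set Mat)
    (hgen : ∀ g : GL2, (g : Mat) ∈ S → codeOf g ∈ L) (h519 : (519:ℕ) ∈ L)
    (h3591 : (3591:ℕ) ∉ L)
    (h : (-1 : GL2) ∈ (Subgroup.closure ({g : GL2 | (g : Mat) ∈ S} ∪ {c1})).topologicalClosure) :
    False := by
  have hle : (Subgroup.closure ({g : GL2 | (g : Mat) ∈ S} ∪ {c1})).topologicalClosure
      ≤ K L hmul hone hinv hlt := by
    apply Subgroup.topologicalClosure_minimal
    · rw [Subgroup.closure_le]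
      rintro g (hg | hg)
      · exact hgen g hg
      · rw [Set.mem_singleton_iff] at hg
        subst hg
        show codeOf c1 ∈ L
        rw [codeOf_c1_gen c1 rfl]
        exact h519
    · exact isClosed_K L hmul hone hinv hlt
  have : codeOf (-1 : GL2) ∈ L := hle h
  rw [codeOf_neg1] at this
  exact h3591 this

end Stmt16Aux

open Stmt16Aux

/-- In `GL(2, ℤ₂)`: `⟨G_{2,b}, c₁⟩ = ⟨G_{4,c}, c₁, −Id⟩ =
`⟨G_{4,d}, c₁, −Id⟩` and `⟨G_{2,b}, c₁′⟩ = ⟨G_{4,c}, c₁′, −Id⟩ = ⟨G_{4,d}, c₁′, −Id⟩`;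
moreover `−Id ∈ ⟨G_{2,b}, c₁⟩` while `−Id ∉ ⟨G_{4,c}, c₁⟩` and `−Id ∉ ⟨G_{4,d}, c₁⟩`. -/
theorem stmt_16 :
    (tjoin G2b {c1} = tjoin G4c {c1, -1} ∧ tjoin G2b {c1} = tjoin G4d {c1, -1}) ∧
    (tjoin G2b {c1'} = tjoin G4c {c1', -1} ∧ tjoin G2b {c1'} = tjoin G4d {c1', -1}) ∧
    (-1 : GL (Fin 2) ℤ_[2]) ∈ tjoin G2b {c1} ∧
    (-1 : GL (Fin 2) ℤ_[2]) ∉ tjoin G4c {c1} ∧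
    (-1 : GL (Fin 2) ℤ_[2]) ∉ tjoin G4d {c1} := by
  have hc1a : ((c1⁻¹ : GL2) : Mat) * !![2,1;-1,2] * (c1 : Mat) = !![2,-1;1,2] := by
    show (!![1,0;0,-1] : Mat) * !![2,1;-1,2] * !![1,0;0,-1] = !![2,-1;1,2]
    ext i j; fin_cases i <;> fin_cases j <;> simp [Matrix.mul_apply, Fin.sum_univ_succ]
  have hc1b : ((c1 : GL2) : Mat) * !![2,-1;1,2] * ((c1⁻¹ : GL2) : Mat) = !![2,1;-1,2] := by
    show (!![1,0;0,-1] : Mat) * !![2,-1;1,2] * !![1,0;0,-1] = !![2,1;-1,2]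
    ext i j; fin_cases i <;> fin_cases j <;> simp [Matrix.mul_apply, Fin.sum_univ_succ]
  have hc1'a : ((c1'⁻¹ : GL2) : Mat) * !![2,1;-1,2] * (c1' : Mat) = !![2,-1;1,2] := by
    show (!![0,1;1,0] : Mat) * !![2,1;-1,2] * !![0,1;1,0] = !![2,-1;1,2]
    ext i j; fin_cases i <;> fin_cases j <;> simp [Matrix.mul_apply, Fin.sum_univ_succ]
  have hc1'b : ((c1' : GL2) : Mat) * !![2,-1;1,2] * ((c1'⁻¹ : GL2) : Mat) = !![2,1;-1,2] := by
    show (!![0,1;1,0] : Mat) * !![2,-1;1,2] * !![0,1;1,0] = !![2,1;-1,2]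
    ext i j; fin_cases i <;> fin_cases j <;> simp [Matrix.mul_apply, Fin.sum_univ_succ]
  have key1 : tjoin G2b {c1} = tjoin G4c {c1, -1} := by
    unfold G2b G4c
    rw [tjoin_clGen, tjoin_clGen, closure_b_eq c1 hc1a hc1b]
  have key1' : tjoin G2b {c1'} = tjoin G4c {c1', -1} := by
    unfold G2b G4c
    rw [tjoin_clGen, tjoin_clGen, closure_b_eq c1' hc1'a hc1'b]
  have keycd : ∀ u : GL2, tjoin G4c {u, -1} = tjoin G4d {u, -1} := by
    intro u
    unfold G4c G4d
    rw [tjoin_clGen, tjoin_clGen, closure_c_eq_d u]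
  have hmem : (-1 : GL (Fin 2) ℤ_[2]) ∈ tjoin G2b {c1} := by
    unfold G2b
    rw [tjoin_clGen]
    exact Subgroup.le_topologicalClosure _
      (Subgroup.subset_closure (Or.inl (Or.inl neg_one_val)))
  refine ⟨⟨key1, key1.trans (keycd c1)⟩, ⟨key1', key1'.trans (keycd c1')⟩, hmem, ?_, ?_⟩
  · intro h
    unfold G4c at h
    rw [tjoin_clGen] at h
    refine not_mem_aux Lc Lc_mul (by decide) Lc_inv Lc_lt _ ?_ (by decide) (by decide) h
    intro g hg
    rcases hg with hg | hg
    · rw [codeOf_neg3 g hg]; decide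
    · rw [Set.mem_singleton_iff] at hg
      rw [codeOf_B g hg]; decide
  · intro h
    unfold G4d at h
    rw [tjoin_clGen] at h
    refine not_mem_aux Ld Ld_mul (by decide) Ld_inv Ld_lt _ ?_ (by decide) (by decide) h
    intro g hg
    rcases hg with hg | hg
    · rw [codeOf_neg3 g hg]; decide
    · rw [Set.mem_singleton_iff] at hg
      rw [codeOf_C g hg]; decide
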